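/- Let g ≥ 2 be an integer, r' a positive integer and d' an integer with gcd(r',d') = 1. Define F(t) = (1−t) · P^{ℍ}_{g}(2r',2d')(t) for real t > 0 with t ≠ 1. Then for all such t one has t^{4r'²(g−1)+1} · F(1/t) = F(t). -/

import Mathlib

open Finset

noncomputable section

/-- `ang x` is `⟨x⟩ = ⌊x⌋ + 1 - x`, the unique element of `(0,1]` with `x + ⟨x⟩ ∈ ℤ`. -/
def ang (x : ℝ) : ℝ := (⌊x⌋ : ℝ) + 1 - x

/-- `M(r₁,…,r_l; λ) = Σ_{i=1}^{l-1} (r_i + r_{i+1}) · ⟨(r₁+⋯+r_i)·λ⟩` for `L = [r₁,…,r_l]`. -/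
def Mfun (L : List ℕ) (lam : ℝ) : ℝ :=
  ∑ i ∈ Finset.range (L.length - 1),
    ((L.getD i 0 : ℝ) + (L.getD (i+1) 0 : ℝ)) * ang (((L.take (i+1)).sum : ℝ) * lam)

/-- `∏_{i=1}^{l-1} (1 - x^{m·(r_i + r_{i+1})})`. -/
def adjProd (x : ℝ) (m : ℕ) (L : List ℕ) : ℝ :=
  ∏ i ∈ Finset.range (L.length - 1), (1 - x ^ (m * (L.getD i 0 + L.getD (i+1) 0)))

/-- `Σ_{1 ≤ i < j ≤ l} r_i r_j`. -/
def pairSum (L : List ℕ) : ℝ :=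
  ∑ i ∈ Finset.range L.length, ∑ j ∈ Finset.Ico (i+1) L.length,
    (L.getD i 0 : ℝ) * (L.getD j 0 : ℝ)

/-- The block factor `∏_{j=1}^{2rᵢ}(1+t^{2j-1})^{g} / (∏_{j=1}^{rᵢ-1}(1-t^{4j}) ∏_{j=1}^{rᵢ}(1-t^{4j}))`. -/
def blockH (g : ℕ) (t : ℝ) (ri : ℕ) : ℝ :=
  (∏ j ∈ Finset.range (2*ri), (1 + t ^ (2*j+1)) ^ g) /
  ((∏ j ∈ Finset.range (ri - 1), (1 - t ^ (4*j+4))) * ∏ j ∈ Finset.range ri, (1 - t ^ (4*j+4)))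

/-- The closed formula `P^{ℍ}_g(2r,2d)(t)` (quaternionic bundles, real points present). -/
def PH (g r : ℕ) (d : ℤ) (t : ℝ) : ℝ :=
  ∑ c : Composition r,
    (-1 : ℝ) ^ (c.length - 1) *
    (t ^ (4 * Mfun c.blocks ((d : ℝ) / (r : ℝ))) / adjProd t 4 c.blocks) *
    t ^ (4 * ((g : ℝ) - 1) * pairSum c.blocks) *
    (c.blocks.map (blockH g t)).prod


/-!
Reversing a composition is an involution of the index set, and it carries the summand at `1/t`
to the summand of the reversed composition at `t`. Under `t ↦ 1/t` each factor `1 ± t^k` becomes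
`±t^{-k}(1 ± t^k)`, so every block factor and every factor `1 - t^{4(rᵢ+rᵢ₊₁)}` contributes a sign
and a power of `t`. Since `gcd(r, d) = 1`, no proper partial sum `s = r₁+⋯+rᵢ` makes `s·d/r` an
integer, so `⟨(r - s)d/r⟩ = 1 - ⟨s·d/r⟩`, which turns the exponent `M` of the reversed composition
into `Σ(rᵢ+rᵢ₊₁) - M`. The powers of `t` then cancel against `t^{4r²(g-1)+1}` because
`r² = Σ rᵢ² + 2 Σ_{i<j} rᵢ rⱼ`.
-/

lemma ang_eq_one_sub_fract (x : ℝ) : ang x = 1 - Int.fract x := by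
  rw [ang, Int.fract]; ring

lemma ang_intCast_sub (n : ℤ) {x : ℝ} (hx : Int.fract x ≠ 0) : ang (n - x) = 1 - ang x := by
  rw [sub_eq_neg_add, ang_eq_one_sub_fract, ang_eq_one_sub_fract, Int.fract_add_intCast,
    Int.fract_neg hx]

lemma Int.fract_natCast_mul_div_ne_zero {r s : ℕ} {d : ℤ} (hcop : Int.gcd r d = 1)
    (hs : 0 < s) (hsr : s < r) : Int.fract ((s : ℝ) * (d / r)) ≠ 0 := by
  rw [Ne, Int.fract_eq_zero_iff]
  rintro ⟨n, hn⟩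
  have hr : (r : ℝ) ≠ 0 := by exact_mod_cast (by omega : r ≠ 0)
  have hsd : (s * d : ℤ) = n * r := by
    rw [mul_div_assoc', eq_div_iff hr] at hn
    exact_mod_cast hn.symm
  have hdvd : (r : ℤ) ∣ s := (Int.isCoprime_iff_gcd_eq_one.mpr hcop).dvd_of_dvd_mul_right
    ⟨n, by rw [hsd, mul_comm]⟩
  exact absurd (Nat.le_of_dvd hs (Int.natCast_dvd_natCast.mp hdvd)) (by omega)

lemma List.sum_range_length_getD {M : Type*} [AddCommMonoid M] (L : List ℕ) (f : ℕ → M) :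
    ∑ i ∈ Finset.range L.length, f (L.getD i 0) = (L.map f).sum := by
  induction L with
  | nil => simp
  | cons a L ih => simp [Finset.sum_range_succ', ← ih, add_comm]

lemma List.sum_take_reverse_add_sum_take (L : List ℕ) (i : ℕ) :
    (L.reverse.take i).sum + (L.take (L.length - i)).sum = L.sum := by
  rw [take_reverse, sum_reverse, add_comm, ← sum_append, take_append_drop]

lemma List.getD_reverse_of_lt_length_sub_one {L : List ℕ} {i : ℕ} (hi : i < L.length - 1) :
    L.reverse.getD (L.length - 1 - 1 - i) 0 = L.getD (i + 1) 0 ∧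
      L.reverse.getD (L.length - 1 - 1 - i + 1) 0 = L.getD i 0 := by
  rw [getD_reverse _ (by omega), getD_reverse _ (by omega)]
  constructor <;> congr 1 <;> omega

def adjSum (L : List ℕ) : ℕ :=
  ∑ i ∈ range (L.length - 1), (L.getD i 0 + L.getD (i + 1) 0)

lemma Mfun_reverse (L : List ℕ) (lam : ℝ) (n : ℤ) (hn : (L.sum : ℝ) * lam = n)
    (hfract : ∀ i, 0 < i → i < L.length → Int.fract ((L.take i).sum * lam) ≠ 0) :
    Mfun L.reverse lam = adjSum L - Mfun L lam := by
  rw [Mfun, Mfun, adjSum, List.length_reverse, Nat.cast_sum, ← sum_sub_distrib,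
    ← sum_range_reflect]
  refine sum_congr rfl fun i hi => ?_
  have hi : i < L.length - 1 := mem_range.mp hi
  obtain ⟨h₁, h₂⟩ := List.getD_reverse_of_lt_length_sub_one hi
  have hsplit := L.sum_take_reverse_add_sum_take (L.length - 1 - 1 - i + 1)
  rw [show L.length - (L.length - 1 - 1 - i + 1) = i + 1 by omega] at hsplit
  have hprefix : ((L.reverse.take (L.length - 1 - 1 - i + 1)).sum : ℝ) * lam
      = n - ((L.take (i + 1)).sum : ℝ) * lam := by
    rw [← hn, ← hsplit]; push_cast; ring
  rw [h₁, h₂, hprefix, ang_intCast_sub _ (hfract _ (by omega) (by omega))]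
  push_cast; ring

lemma adjProd_reverse (x : ℝ) (m : ℕ) (L : List ℕ) : adjProd x m L.reverse = adjProd x m L := by
  rw [adjProd, adjProd, List.length_reverse, ← prod_range_reflect]
  refine prod_congr rfl fun i hi => ?_
  obtain ⟨h₁, h₂⟩ := List.getD_reverse_of_lt_length_sub_one (mem_range.mp hi)
  rw [h₁, h₂, add_comm (L.getD (i + 1) 0)]

section InvPow

variable {K ι : Type*} [Field K] {x : K}

lemma prod_one_add_inv_pow (hx : x ≠ 0) (s : Finset ι) (f : ι → ℕ) :
    ∏ i ∈ s, (1 + x⁻¹ ^ f i) = (∏ i ∈ s, (1 + x ^ f i)) / x ^ ∑ i ∈ s, f i := by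
  rw [← prod_pow_eq_pow_sum, ← prod_div_distrib]
  refine prod_congr rfl fun i _ => ?_
  rw [inv_pow]
  field_simp
  ring

lemma prod_one_sub_inv_pow (hx : x ≠ 0) (s : Finset ι) (f : ι → ℕ) :
    ∏ i ∈ s, (1 - x⁻¹ ^ f i) = (-1) ^ s.card * (∏ i ∈ s, (1 - x ^ f i)) / x ^ ∑ i ∈ s, f i := by
  rw [← prod_pow_eq_pow_sum, ← prod_const, ← prod_mul_distrib, ← prod_div_distrib]
  refine prod_congr rfl fun i _ => ?_
  rw [inv_pow]
  field_simp
  ring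

end InvPow

lemma adjProd_inv {x : ℝ} (hx : x ≠ 0) (m : ℕ) (L : List ℕ) :
    adjProd x⁻¹ m L = (-1) ^ (L.length - 1) * adjProd x m L / x ^ (m * adjSum L) := by
  rw [adjProd, adjProd, adjSum, prod_one_sub_inv_pow hx, card_range, mul_sum]

lemma sum_range_two_mul_add_one (n : ℕ) : ∑ j ∈ range n, (2 * j + 1) = n ^ 2 := by
  induction n with
  | zero => simp
  | succ n ih => rw [sum_range_succ, ih]; ring

lemma sum_range_four_mul_add_four (n : ℕ) : ∑ j ∈ range n, (4 * j + 4) = 2 * n ^ 2 + 2 * n := by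
  induction n with
  | zero => simp
  | succ n ih => rw [sum_range_succ, ih]; ring

lemma blockH_inv (g : ℕ) {x : ℝ} (hx : x ≠ 0) {n : ℕ} (hn : 0 < n) :
    blockH g x⁻¹ n = -blockH g x n * x ^ (4 * n ^ 2) / x ^ (4 * n ^ 2 * g) := by
  obtain ⟨k, rfl⟩ := Nat.exists_eq_add_one_of_ne_zero hn.ne'
  have hsign : (-1 : ℝ) ^ k * (-1) ^ (k + 1) = -1 := by
    rw [← pow_add, Odd.neg_one_pow ⟨k, by ring⟩]
  have hden : x ^ (4 * (k + 1) ^ 2)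
      = x ^ (2 * k ^ 2 + 2 * k) * x ^ (2 * (k + 1) ^ 2 + 2 * (k + 1)) := by
    rw [← pow_add]; ring_nf
  have hnum : x ^ (4 * (k + 1) ^ 2 * g) = (x ^ (2 * (k + 1)) ^ 2) ^ g := by
    rw [← pow_mul]; ring_nf
  rw [blockH, blockH, prod_pow, prod_pow, prod_one_add_inv_pow hx, prod_one_sub_inv_pow hx,
    prod_one_sub_inv_pow hx, sum_range_two_mul_add_one, sum_range_four_mul_add_four,
    sum_range_four_mul_add_four, card_range, card_range, Nat.add_sub_cancel, hden, hnum,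
    div_mul_div_comm, mul_mul_mul_comm, hsign, div_pow]
  field_simp

lemma prod_map_blockH_inv (g : ℕ) {x : ℝ} (hx : x ≠ 0) (L : List ℕ) (hL : ∀ n ∈ L, 0 < n) :
    (L.map (blockH g x⁻¹)).prod = (-1) ^ L.length * (L.map (blockH g x)).prod *
      x ^ (4 * (L.map (· ^ 2)).sum) / x ^ (4 * (L.map (· ^ 2)).sum * g) := by
  induction L with
  | nil => simp
  | cons a L ih =>
    simp only [List.map_cons, List.prod_cons, List.sum_cons, List.length_cons,
      blockH_inv g hx (hL a List.mem_cons_self), ih fun n hn => hL n (List.mem_cons_of_mem a hn),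
      mul_add, add_mul, pow_add, pow_succ]
    field_simp

lemma two_mul_sum_range_sum_Ico_mul {R : Type*} [CommRing R] (f : ℕ → R) (n : ℕ) :
    2 * ∑ i ∈ range n, ∑ j ∈ Ico (i + 1) n, f i * f j
      = (∑ i ∈ range n, f i) ^ 2 - ∑ i ∈ range n, f i ^ 2 := by
  induction n with
  | zero => simp
  | succ n ih =>
    have hrow : ∀ i ∈ range n, ∑ j ∈ Ico (i + 1) (n + 1), f i * f j
        = ∑ j ∈ Ico (i + 1) n, f i * f j + f i * f n := fun i hi =>
      sum_Ico_succ_top (by simpa using hi) _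
    rw [sum_range_succ, Ico_self, sum_empty, add_zero, sum_congr rfl hrow, sum_add_distrib,
      ← sum_mul, sum_range_succ, sum_range_succ]
    linear_combination ih

lemma two_mul_pairSum (L : List ℕ) :
    2 * pairSum L = (L.sum : ℝ) ^ 2 - ((L.map (· ^ 2)).sum : ℕ) := by
  rw [pairSum, two_mul_sum_range_sum_Ico_mul (fun i => (L.getD i 0 : ℝ)),
    L.sum_range_length_getD, L.sum_range_length_getD (fun a => (a : ℝ) ^ 2), Nat.cast_list_sum,
    Nat.cast_list_sum, List.map_map]
  simp [Function.comp_def]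

lemma pairSum_reverse (L : List ℕ) : pairSum L.reverse = pairSum L := by
  have h := two_mul_pairSum L.reverse
  rw [List.sum_reverse, List.map_reverse, List.sum_reverse, ← two_mul_pairSum] at h
  linarith

-- `M, A, P, S` stand for `Mfun`, `adjSum`, `pairSum` and `Σ rᵢ²`; `D, B` for `adjProd` and the
-- product of the block factors.
lemma duality_rpow_identity {t : ℝ} (ht : 0 < t) {l : ℕ} (hl : l ≠ 0) (M A P S G D B : ℝ) :
    t ^ (4 * (S + 2 * P) * (G - 1) + 1) * ((1 - t⁻¹) *
      ((-1) ^ (l - 1) * ((t ^ (4 * M))⁻¹ / ((-1) ^ (l - 1) * D / t ^ (4 * A))) *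
        (t ^ (4 * (G - 1) * P))⁻¹ * ((-1) ^ l * B * t ^ (4 * S) / t ^ (4 * S * G))))
    = (1 - t) * ((-1) ^ (l - 1) * (t ^ (4 * (A - M)) / D) * t ^ (4 * (G - 1) * P) * B) := by
  obtain ⟨k, rfl⟩ := Nat.exists_eq_add_one_of_ne_zero hl
  rw [show 4 * (S + 2 * P) * (G - 1) + 1
      = 4 * S * G - 4 * S + (4 * (G - 1) * P + 4 * (G - 1) * P) + 1 by ring,
    mul_sub 4 A M, Real.rpow_add ht, Real.rpow_add ht, Real.rpow_add ht, Real.rpow_sub ht,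
    Real.rpow_sub ht, Real.rpow_one, Nat.add_sub_cancel, pow_succ]
  field_simp
  ring

def phTerm (g : ℕ) (lam t : ℝ) (L : List ℕ) : ℝ :=
  (-1 : ℝ) ^ (L.length - 1) * (t ^ (4 * Mfun L lam) / adjProd t 4 L) *
    t ^ (4 * ((g : ℝ) - 1) * pairSum L) * (L.map (blockH g t)).prod

lemma PH_eq_sum_phTerm (g r : ℕ) (d : ℤ) (t : ℝ) :
    PH g r d t = ∑ c : Composition r, phTerm g (d / r) t c.blocks := rfl

lemma phTerm_one_div (g : ℕ) (lam : ℝ) {t : ℝ} (ht : 0 < t) (L : List ℕ) (hL : L ≠ [])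
    (hpos : ∀ n ∈ L, 0 < n) (n : ℤ) (hn : (L.sum : ℝ) * lam = n)
    (hfract : ∀ i, 0 < i → i < L.length → Int.fract ((L.take i).sum * lam) ≠ 0) :
    t ^ (4 * (L.sum : ℝ) ^ 2 * ((g : ℝ) - 1) + 1) * ((1 - 1 / t) * phTerm g lam (1 / t) L)
      = (1 - t) * phTerm g lam t L.reverse := by
  have hsq : (L.sum : ℝ) ^ 2 = ((L.map (· ^ 2)).sum : ℕ) + 2 * pairSum L := by
    linarith [two_mul_pairSum L]
  rw [phTerm, phTerm, hsq, one_div, Real.inv_rpow ht.le, Real.inv_rpow ht.le,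
    adjProd_inv ht.ne', prod_map_blockH_inv g ht.ne' L hpos, List.length_reverse,
    Mfun_reverse L lam n hn hfract, adjProd_reverse, pairSum_reverse, List.map_reverse,
    List.prod_reverse]
  simp only [← Real.rpow_natCast t]
  push_cast
  exact duality_rpow_identity ht (by simpa using hL) _ _ _ _ _ _ _

lemma Composition.fract_sum_take_mul_ne_zero {r : ℕ} (c : Composition r) {d : ℤ}
    (hcop : Int.gcd r d = 1) {i : ℕ} (hi₀ : 0 < i) (hi : i < c.length) :
    Int.fract ((c.blocks.take i).sum * ((d : ℝ) / r)) ≠ 0 := by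
  refine Int.fract_natCast_mul_div_ne_zero hcop ?_ ?_
  · calc 0 = c.sizeUpTo 0 := c.sizeUpTo_zero.symm
      _ < c.sizeUpTo 1 := c.sizeUpTo_strict_mono (by omega)
      _ ≤ c.sizeUpTo i := c.monotone_sizeUpTo hi₀
  · calc c.sizeUpTo i < c.sizeUpTo (i + 1) := c.sizeUpTo_strict_mono hi
      _ ≤ r := c.sizeUpTo_le _

theorem stmt3_general (g r' : ℕ) (hr : 0 < r')
    (d' : ℤ) (hcop : Int.gcd (r' : ℤ) d' = 1)
    (t : ℝ) (ht : 0 < t) :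
    t ^ (4 * (r' : ℝ)^2 * ((g : ℝ) - 1) + 1) * ((1 - 1/t) * PH g r' d' (1/t)) =
      (1 - t) * PH g r' d' t := by
  rw [PH_eq_sum_phTerm, PH_eq_sum_phTerm, mul_sum, mul_sum, mul_sum]
  refine Fintype.sum_equiv Composition.reverse_involutive.toPerm _ _ fun c => ?_
  have hsum : (c.blocks.sum : ℝ) = r' := by exact_mod_cast c.blocks_sum
  have hr₀ : (r' : ℝ) ≠ 0 := by positivity
  have h := phTerm_one_div g (d' / r') ht c.blocks
    (List.ne_nil_of_length_pos (c.length_pos_of_pos hr)) (fun _ => c.blocks_pos) d'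
    (by rw [hsum]; field_simp)
    (fun _ hi₀ hi => c.fract_sum_take_mul_ne_zero hcop hi₀ hi)
  rwa [hsum] at h

/-- Strange Poincaré duality for `(1-t)·P^{ℍ}_g(2r',2d')`
(Theorem `strange_Poincare_duality_tauH_with_real_points`). -/
theorem stmt3 (g r' : ℕ) (hg : 2 ≤ g) (hr : 0 < r')
    (d' : ℤ) (hcop : Int.gcd (r' : ℤ) d' = 1)
    (t : ℝ) (ht : 0 < t) (ht1 : t ≠ 1) :
    t ^ (4 * (r' : ℝ)^2 * ((g : ℝ) - 1) + 1) * ((1 - 1/t) * PH g r' d' (1/t)) =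
      (1 - t) * PH g r' d' t :=
  stmt3_general g r' hr d' hcop t ht

end
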